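/- Let n ≥ 2 and define f : 𝔽₂ⁿ → 𝔽₂ from a clique C = {x₁,…,x_k} (vectors with first coordinate 0, pairwise sums containing subsequence 101) as follows: f(α) = complement of a_{i,ℓ+1} if α = (ā_{i1},…,ā_{iℓ}, a_{i,ℓ+1},…,a_{in}) for some i and 0 ≤ ℓ ≤ n−1 where x_i = (a_{i1},…,a_{in}); f(α) = a_{i,ℓ+1} if α = (a_{i1},…,a_{iℓ}, ā_{i,ℓ+1},…,ā_{in}); f(α) = 0 otherwise. Then f is well-defined; that is, no vector α ∈ 𝔽₂ⁿ is assigned two conflicting values by these rules. -/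
import Mathlib


/-- The SDS map over the complete graph `K n` with identity update order and
common vertex function `f`: vertices `0, 1, …, n-1` are updated in order,
each update replacing that coordinate with `f` of the current system state. -/
def sdsMap {n : ℕ} (f : (Fin n → ZMod 2) → ZMod 2) (x : Fin n → ZMod 2) :
    Fin n → ZMod 2 :=
  (List.finRange n).foldl (fun v i => Function.update v i (f v)) x

/-- `z` contains `101` as a subsequence. -/
def contains101 {n : ℕ} (z : Fin n → ZMod 2) : Prop :=
  ∃ i j k : Fin n, i < j ∧ j < k ∧ z i = 1 ∧ z j = 0 ∧ z k = 1

/-- `z` contains `111` as a subsequence. -/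
def contains111 {n : ℕ} (z : Fin n → ZMod 2) : Prop :=
  ∃ i j k : Fin n, i < j ∧ j < k ∧ z i = 1 ∧ z j = 1 ∧ z k = 1

/-- The number of 2-cycles in the phase space of `sdsMap f`. -/
noncomputable def numTwoCycles {n : ℕ} (f : (Fin n → ZMod 2) → ZMod 2) : ℕ :=
  Set.ncard {p : Sym2 (Fin n → ZMod 2) |
    ∃ x y, p = s(x, y) ∧ x ≠ y ∧ sdsMap f x = y ∧ sdsMap f y = x}

/-- Complement the first `ℓ` coordinates of `x`. -/
def flipFirst {n : ℕ} (ℓ : ℕ) (x : Fin n → ZMod 2) : Fin n → ZMod 2 :=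
  fun i => if (i : ℕ) < ℓ then 1 + x i else x i

/-- Keep the first `m` coordinates of `x` and complement the remaining ones. -/
def flipLast {n : ℕ} (m : ℕ) (x : Fin n → ZMod 2) : Fin n → ZMod 2 :=
  fun i => if (i : ℕ) < m then x i else 1 + x i

lemma flipkey1 (p q : Prop) [Decidable p] [Decidable q] (a b : ZMod 2)
    (h : (if p then 1 + a else a) = (if q then 1 + b else b)) :
    a + b = if p ↔ q then 0 else 1 := by
  by_cases hp : p <;> by_cases hq : q <;>
    simp only [hp, hq, if_true, if_false, iff_true, iff_false, iff_self,
      not_true_eq_false, not_false_eq_true] at h ⊢ <;>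
    revert h <;> revert a b <;> decide

lemma flipkey2 (p q : Prop) [Decidable p] [Decidable q] (a b : ZMod 2)
    (h : (if p then 1 + a else a) = (if q then b else 1 + b)) :
    a + b = if p ↔ ¬ q then 0 else 1 := by
  by_cases hp : p <;> by_cases hq : q <;>
    simp only [hp, hq, if_true, if_false, iff_true, iff_false, iff_self,
      not_true_eq_false, not_false_eq_true] at h ⊢ <;>
    revert h <;> revert a b <;> decide

lemma zmod2_self (a : ZMod 2) : a + a = 0 := by revert a; decide

theorem stmt4 (n : ℕ) (hn : 2 ≤ n) (C : Finset (Fin n → ZMod 2))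
    (hC0 : ∀ x ∈ C, x ⟨0, by omega⟩ = 0)
    (hCadj : ∀ x ∈ C, ∀ y ∈ C, x ≠ y → contains101 (x + y)) :
    ∀ x ∈ C, ∀ y ∈ C, ∀ ℓ m : ℕ, ℓ ≤ n - 1 → m ≤ n - 1 →
      (x, ℓ) ≠ (y, m) →
      flipFirst ℓ x ≠ flipFirst m y ∧ flipFirst ℓ x ≠ flipLast m y := by
  intro x hx y hy ℓ m hℓ hm hne
  constructor
  · intro h
    have key : ∀ t : Fin n, x t + y t = if ((t:ℕ) < ℓ ↔ (t:ℕ) < m) then 0 else 1 := by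
      intro t
      exact flipkey1 _ _ _ _ (congrFun h t)
    by_cases hxy : x = y
    · subst hxy
      have hlm : ℓ ≠ m := fun h' => hne (by rw [h'])
      have hmin : min ℓ m < n := by omega
      have hk := key ⟨min ℓ m, hmin⟩
      rw [zmod2_self, if_neg (by simp only [Fin.val_mk]; omega)] at hk
      exact zero_ne_one hk
    · obtain ⟨i, j, k, hij, hjk, hi, hj, hk⟩ := hCadj x hx y hy hxy
      have hij' : (i:ℕ) < j := hij
      have hjk' : (j:ℕ) < k := hjk
      have Pi : ¬ ((i:ℕ) < ℓ ↔ (i:ℕ) < m) := by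
        intro P
        have hz := key i
        rw [if_pos P] at hz
        have hv : x i + y i = 1 := hi
        rw [hv] at hz
        exact one_ne_zero hz
      have Pj : ((j:ℕ) < ℓ ↔ (j:ℕ) < m) := by
        by_contra P
        have hz := key j
        rw [if_neg P] at hz
        have hv : x j + y j = 0 := hj
        rw [hv] at hz
        exact zero_ne_one hz
      have Pk : ¬ ((k:ℕ) < ℓ ↔ (k:ℕ) < m) := by
        intro P
        have hz := key k
        rw [if_pos P] at hz
        have hv : x k + y k = 1 := hk
        rw [hv] at hz
        exact one_ne_zero hz
      omega
  · intro h
    have key : ∀ t : Fin n, x t + y t = if ((t:ℕ) < ℓ ↔ ¬ (t:ℕ) < m) then 0 else 1 := by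
      intro t
      exact flipkey2 _ _ _ _ (congrFun h t)
    by_cases hxy : x = y
    · subst hxy
      have hlast : n - 1 < n := by omega
      have hk := key ⟨n - 1, hlast⟩
      rw [zmod2_self] at hk
      by_cases P : ((n - 1 : ℕ) < ℓ ↔ ¬ (n - 1 : ℕ) < m)
      · simp only [Fin.val_mk] at hk P; omega
      · rw [if_neg (by simpa using P)] at hk
        exact zero_ne_one hk
    · obtain ⟨i, j, k, hij, hjk, hi, hj, hk⟩ := hCadj x hx y hy hxy
      have hij' : (i:ℕ) < j := hij
      have hjk' : (j:ℕ) < k := hjk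
      have P0 : ((0:ℕ) < ℓ ↔ ¬ (0:ℕ) < m) := by
        by_contra P
        have hz := key ⟨0, by omega⟩
        rw [if_neg (by simpa using P)] at hz
        have hv : x ⟨0, by omega⟩ + y ⟨0, by omega⟩ = 0 := by
          rw [hC0 x hx, hC0 y hy, add_zero]
        rw [hv] at hz
        exact zero_ne_one hz
      have Pi : ¬ ((i:ℕ) < ℓ ↔ ¬ (i:ℕ) < m) := by
        intro P
        have hz := key i
        rw [if_pos P] at hz
        have hv : x i + y i = 1 := hi
        rw [hv] at hz
        exact one_ne_zero hz
      have Pj : ((j:ℕ) < ℓ ↔ ¬ (j:ℕ) < m) := by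
        by_contra P
        have hz := key j
        rw [if_neg P] at hz
        have hv : x j + y j = 0 := hj
        rw [hv] at hz
        exact zero_ne_one hz
      have Pk : ¬ ((k:ℕ) < ℓ ↔ ¬ (k:ℕ) < m) := by
        intro P
        have hz := key k
        rw [if_pos P] at hz
        have hv : x k + y k = 1 := hk
        rw [hv] at hz
        exact one_ne_zero hz
      omega
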